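/- If L₁ ⊆ Σ₁* and L₂ ⊆ Σ₂* are languages over disjoint alphabets Σ₁ and Σ₂ that are both accepted by nrNFAwtls, then the shuffle sh(L₁, L₂) ⊆ (Σ₁ ∪ Σ₂)* is accepted by an nrNFAwtl; i.e., the class of languages accepted by nrNFAwtls is closed under disjoint shuffle. -/

import Mathlib

/-- The end-of-tape behaviour of a non-returning automaton with translucent
letters: either a set of states to continue with (the empty set meaning that
the transition is undefined), or the operation `Accept`. -/
inductive EndMove (Q : Type) where
  | cont : Set Q → EndMove Q
  | accept : EndMove Q

/-- A nondeterministic finite automaton with translucent letters (NFAwtl).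
`τ q` is the set of letters that are translucent for state `q`. -/
structure NFAwtl (Q : Type) (A : Type) where
  τ : Q → Set A
  I : Set Q
  F : Set Q
  δ : Q → A → Set Q
  tr_compat : ∀ q a, a ∈ τ q → δ q a = ∅

namespace NFAwtl

variable {Q A : Type}

/-- A single computation step of an NFAwtl: the first letter (from the left)
that is not translucent for the current state is read and deleted. -/
inductive Step (M : NFAwtl Q A) : Q × List A → Q × List A → Prop
  | read (q q' : Q) (u v : List A) (a : A) :
      (∀ b ∈ u, b ∈ M.τ q) → a ∉ M.τ q → q' ∈ M.δ q a →
      Step M (q, u ++ a :: v) (q', u ++ v)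

/-- The language accepted by an NFAwtl: words from which some computation
reaches a configuration whose remaining tape contents is translucent for a
final state. -/
def lang (M : NFAwtl Q A) : Set (List A) :=
  { w | ∃ q₀ ∈ M.I, ∃ q w', Relation.ReflTransGen (Step M) (q₀, w) (q, w') ∧
        (∀ b ∈ w', b ∈ M.τ q) ∧ q ∈ M.F }

/-- An NFAwtl is deterministic (a DFAwtl) if it has a single initial state and
at most one transition for each state/letter pair. -/
def IsDet (M : NFAwtl Q A) : Prop :=
  (∃ q, M.I = {q}) ∧ ∀ q a, (M.δ q a).Subsingleton

end NFAwtl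

/-- A configuration of a non-returning automaton with translucent letters:
`conf x q w` means the tape contains `x ++ w` followed by the end-of-tape
marker, the current state is `q`, and the head is positioned at the first
letter of `w`; `accept` is the accepting halting configuration. -/
inductive NrConf (Q : Type) (A : Type) where
  | conf : List A → Q → List A → NrConf Q A
  | accept : NrConf Q A

/-- A non-returning nondeterministic finite automaton with translucent
letters (nrNFAwtl). -/
structure NrNFAwtl (Q : Type) (A : Type) where
  τ : Q → Set A
  I : Set Q
  δ : Q → A → Set Q
  δend : Q → EndMove Q
  tr_compat : ∀ q a, a ∈ τ q → δ q a = ∅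

namespace NrNFAwtl

variable {Q A : Type}

/-- A single computation step of an nrNFAwtl. -/
inductive Step (M : NrNFAwtl Q A) : NrConf Q A → NrConf Q A → Prop
  | read (x : List A) (q q' : Q) (u v : List A) (a : A) :
      (∀ b ∈ u, b ∈ M.τ q) → a ∉ M.τ q → q' ∈ M.δ q a →
      Step M (.conf x q (u ++ a :: v)) (.conf (x ++ u) q' v)
  | restart (x w : List A) (q q' : Q) (S : Set Q) :
      (∀ b ∈ w, b ∈ M.τ q) → M.δend q = .cont S → q' ∈ S →
      Step M (.conf x q w) (.conf [] q' (x ++ w))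
  | accept (x w : List A) (q : Q) :
      (∀ b ∈ w, b ∈ M.τ q) → M.δend q = .accept →
      Step M (.conf x q w) .accept

/-- The language accepted by an nrNFAwtl. -/
def lang (M : NrNFAwtl Q A) : Set (List A) :=
  { w | ∃ q₀ ∈ M.I, Relation.ReflTransGen (Step M) (.conf [] q₀ w) .accept }

/-- An nrNFAwtl is deterministic (an nrDFAwtl) if it has a single initial
state and, for every state and every letter (including the end-of-tape
marker), at most one transition is available. -/
def IsDet (M : NrNFAwtl Q A) : Prop :=
  (∃ q, M.I = {q}) ∧ (∀ q a, (M.δ q a).Subsingleton) ∧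
  (∀ q S, M.δend q = .cont S → S.Subsingleton)

end NrNFAwtl

/-- `L` is accepted by some NFAwtl. -/
def AcceptedByNFAwtl {A : Type} [Fintype A] (L : Set (List A)) : Prop :=
  ∃ (Q : Type) (_ : Fintype Q) (M : NFAwtl Q A), M.lang = L

/-- `L` is accepted by some DFAwtl. -/
def AcceptedByDFAwtl {A : Type} [Fintype A] (L : Set (List A)) : Prop :=
  ∃ (Q : Type) (_ : Fintype Q) (M : NFAwtl Q A), M.IsDet ∧ M.lang = L

/-- `L` is accepted by some nrNFAwtl. -/
def AcceptedByNrNFAwtl {A : Type} [Fintype A] (L : Set (List A)) : Prop :=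
  ∃ (Q : Type) (_ : Fintype Q) (M : NrNFAwtl Q A), M.lang = L

/-- `L` is accepted by some nrDFAwtl. -/
def AcceptedByNrDFAwtl {A : Type} [Fintype A] (L : Set (List A)) : Prop :=
  ∃ (Q : Type) (_ : Fintype Q) (M : NrNFAwtl Q A), M.IsDet ∧ M.lang = L

/-- `IsShuffle u v w` says that `w` is an interleaving (shuffle) of `u` and `v`. -/
inductive IsShuffle {A : Type} : List A → List A → List A → Prop
  | nil : IsShuffle [] [] []
  | left (a : A) (u v w : List A) : IsShuffle u v w → IsShuffle (a :: u) v (a :: w)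
  | right (a : A) (u v w : List A) : IsShuffle u v w → IsShuffle u (a :: v) (a :: w)


/-!
A word `z` over `Σ₁ ⊕ Σ₂` lies in `sh(L₁, L₂)` iff its `Σ₁`-projection lies in `L₁` and its
`Σ₂`-projection lies in `L₂`. The shuffle automaton first runs the automaton for `L₁` with every
letter of `Σ₂` translucent; where that automaton would accept, it restarts instead in an initial
state of the automaton for `L₂`, which treats every letter of `Σ₁` as translucent. Reading deletes
only letters of the alphabet being simulated, so the `Σ₂`-projection of the tape handed to the
second phase is still that of `z`.
-/

open Relation

theorem Relation.ReflTransGen.exists_preimage {α β : Type*} {r : α → α → Prop}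
    {s : β → β → Prop} {f : α → β} (hf : ∀ a b, s (f a) b → ∃ a', r a a' ∧ f a' = b)
    {a : α} {b : β} (h : ReflTransGen s (f a) b) : ∃ a', ReflTransGen r a a' ∧ f a' = b := by
  induction h with
  | refl => exact ⟨a, .refl, rfl⟩
  | tail _ hstep ih =>
    obtain ⟨a', hrun, rfl⟩ := ih
    obtain ⟨a'', hstep', rfl⟩ := hf a' _ hstep
    exact ⟨a'', hrun.tail hstep', rfl⟩

def EndMove.map {Q Q' : Type} (f : Q → Q') (e : EndMove Q') : EndMove Q → EndMove Q'
  | .cont S => .cont (f '' S)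
  | .accept => e

namespace NrConf

variable {Q Q' A B : Type}

def map (f : Q → Q') (π : List A → List B) : NrConf Q A → NrConf Q' B
  | conf x q w => conf (π x) (f q) (π w)
  | accept => accept

@[simp] lemma map_conf (f : Q → Q') (π : List A → List B) (x : List A) (q : Q) (w : List A) :
    (conf x q w).map f π = conf (π x) (f q) (π w) := rfl

@[simp] lemma map_accept (f : Q → Q') (π : List A → List B) :
    (accept : NrConf Q A).map f π = accept := rfl

@[simp] lemma map_eq_accept_iff {f : Q → Q'} {π : List A → List B} {c : NrConf Q A} :
    c.map f π = accept ↔ c = accept := by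
  cases c <;> simp

def tape : NrConf Q A → List A
  | conf x _ w => x ++ w
  | accept => []

end NrConf

namespace NrNFAwtl

open NrConf

variable {Q Q₁ Q₂ A A₁ A₂ B : Type}

lemma not_step_accept {M : NrNFAwtl Q A} {c : NrConf Q A} : ¬ M.Step .accept c := nofun

lemma reflTransGen_accept_iff {M : NrNFAwtl Q A} {x w : List A} {q : Q} :
    ReflTransGen M.Step (.conf x q w) .accept ↔
      ∃ y p z, ReflTransGen M.Step (.conf x q w) (.conf y p z) ∧ M.Step (.conf y p z) .accept := by
  refine ⟨fun h => ?_, fun ⟨y, p, z, hrun, hstep⟩ => hrun.tail hstep⟩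
  rcases h.cases_tail with h | ⟨c, hrun, hstep⟩
  · cases h
  · cases c with
    | conf y p z => exact ⟨y, p, z, hrun, hstep⟩
    | accept => cases hstep

section Comap

variable (g : B → Option A) (M : NrNFAwtl Q A)

def comap : NrNFAwtl Q B where
  τ q := {b | ∀ a ∈ g b, a ∈ M.τ q}
  I := M.I
  δ q b := {p | ∃ a ∈ g b, p ∈ M.δ q a}
  δend := M.δend
  tr_compat q b hb := by
    ext p
    simp only [Set.mem_ofPred_eq, Set.mem_empty_iff_false, iff_false, not_exists, not_and]
    intro a ha hp
    simp [M.tr_compat q a (hb a ha)] at hp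

variable {g M}

lemma forall_mem_comap_τ {q : Q} {u : List B} :
    (∀ b ∈ u, b ∈ (M.comap g).τ q) ↔ ∀ a ∈ u.filterMap g, a ∈ M.τ q := by
  simp only [comap, Set.mem_ofPred_eq, List.mem_filterMap, Option.mem_def]
  grind

lemma step_map_of_step_comap {c c' : NrConf Q B} (h : (M.comap g).Step c c') :
    M.Step (c.map id (List.filterMap g)) (c'.map id (List.filterMap g)) := by
  cases h with
  | read x q q' u v b hu hb hq' =>
    obtain ⟨a, ha, hq'⟩ := hq'
    have hna : a ∉ M.τ q := fun h => hb fun a' ha' => Option.mem_unique ha ha' ▸ h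
    simpa [List.filterMap_cons, Option.mem_def.1 ha] using
      Step.read _ q q' _ (v.filterMap g) a (forall_mem_comap_τ.1 hu) hna hq'
  | restart x w q q' S hw hS hq' =>
    simpa using Step.restart _ _ q q' S (forall_mem_comap_τ.1 hw) hS hq'
  | accept x w q hw hacc => exact Step.accept _ _ q (forall_mem_comap_τ.1 hw) hacc

lemma exists_step_comap {c : NrConf Q B} {d : NrConf Q A}
    (h : M.Step (c.map id (List.filterMap g)) d) :
    ∃ c', (M.comap g).Step c c' ∧ c'.map id (List.filterMap g) = d := by
  rcases c with ⟨x, q, w⟩ | _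
  · generalize hc : (conf x q w).map id (List.filterMap g) = c at h
    cases h with
    | read _ _ q' u v a hu ha hq' =>
      obtain ⟨rfl, rfl, hw⟩ := conf.inj hc
      obtain ⟨U, W, rfl, rfl, hW⟩ := List.filterMap_eq_append_iff.1 hw
      obtain ⟨U', b, V, rfl, hU', hb, rfl⟩ := List.filterMap_eq_cons_iff.1 hW
      have hU'nil : U'.filterMap g = [] := List.filterMap_eq_nil_iff.2 hU'
      refine ⟨conf (x ++ (U ++ U')) q' V, ?_, by simp [hU'nil]⟩
      rw [← List.append_assoc U]
      refine Step.read x q q' (U ++ U') V b (forall_mem_comap_τ.2 ?_) ?_ ⟨a, hb, hq'⟩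
      · simpa [hU'nil] using hu
      · exact fun h => ha (h a hb)
    | restart _ _ _ q' S hw hS hq' =>
      obtain ⟨rfl, rfl, rfl⟩ := conf.inj hc
      exact ⟨conf [] q' (x ++ w), Step.restart x w q q' S (forall_mem_comap_τ.2 hw) hS hq',
        by simp⟩
    | accept _ _ _ hw hacc =>
      obtain ⟨rfl, rfl, rfl⟩ := conf.inj hc
      exact ⟨accept, Step.accept x w q (forall_mem_comap_τ.2 hw) hacc, rfl⟩
  · cases h

lemma filterMap_tape_of_step_comap {C : Type} {g' : B → Option C}
    (hgg' : ∀ b, g b = none ∨ g' b = none) {c c' : NrConf Q B} (h : (M.comap g).Step c c')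
    (hc' : c' ≠ .accept) : c'.tape.filterMap g' = c.tape.filterMap g' := by
  cases h with
  | read x q q' u v b _ _ hq' =>
    obtain ⟨a, ha, -⟩ := hq'
    have hb' : g' b = none := (hgg' b).resolve_left (by simp [Option.mem_def.1 ha])
    simp [tape, hb']
  | restart => simp [tape]
  | accept => exact absurd rfl hc'

lemma filterMap_tape_of_reflTransGen_comap {C : Type} {g' : B → Option C}
    (hgg' : ∀ b, g b = none ∨ g' b = none) {c c' : NrConf Q B}
    (h : ReflTransGen (M.comap g).Step c c') (hc' : c' ≠ .accept) :
    c'.tape.filterMap g' = c.tape.filterMap g' := by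
  induction h with
  | refl => rfl
  | tail _ hstep ih =>
    rw [filterMap_tape_of_step_comap hgg' hstep hc', ih]
    rintro rfl
    exact not_step_accept hstep

theorem mem_lang_comap {w : List B} : w ∈ (M.comap g).lang ↔ w.filterMap g ∈ M.lang := by
  constructor
  · rintro ⟨q₀, hq₀, h⟩
    exact ⟨q₀, hq₀, ReflTransGen.lift _ (fun _ _ => step_map_of_step_comap) _ _ h⟩
  · rintro ⟨q₀, hq₀, h⟩
    obtain ⟨c, hrun, hc⟩ := ReflTransGen.exists_preimage (fun _ _ => exists_step_comap)
      (a := .conf [] q₀ w) h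
    rw [map_eq_accept_iff] at hc
    exact ⟨q₀, hq₀, hc ▸ hrun⟩

end Comap

section AndThen

variable (N₁ : NrNFAwtl Q₁ A) (N₂ : NrNFAwtl Q₂ A)

def andThen : NrNFAwtl (Q₁ ⊕ Q₂) A where
  τ := Sum.elim N₁.τ N₂.τ
  I := Sum.inl '' N₁.I
  δ := Sum.elim (fun q a => Sum.inl '' N₁.δ q a) (fun q a => Sum.inr '' N₂.δ q a)
  δend := Sum.elim (fun q => EndMove.map Sum.inl (.cont (Sum.inr '' N₂.I)) (N₁.δend q))
    (fun q => EndMove.map Sum.inr .accept (N₂.δend q))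
  tr_compat := by
    rintro (q | q) a h
    · simp [N₁.tr_compat q a h]
    · simp [N₂.tr_compat q a h]

variable {N₁ N₂}

lemma step_andThen_inl {c c' : NrConf Q₁ A} (h : N₁.Step c c') (hc' : c' ≠ .accept) :
    (N₁.andThen N₂).Step (c.map Sum.inl id) (c'.map Sum.inl id) := by
  cases h with
  | read x q q' u v a hu ha hq' => exact Step.read x _ _ u v a hu ha ⟨q', hq', rfl⟩
  | restart x w q q' S hw hS hq' =>
    exact Step.restart x w _ _ (Sum.inl '' S) hw (by simp [andThen, hS, EndMove.map])
      ⟨q', hq', rfl⟩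
  | accept => exact absurd rfl hc'

lemma step_andThen_switch {x w : List A} {q : Q₁} {r : Q₂} (h : N₁.Step (.conf x q w) .accept)
    (hr : r ∈ N₂.I) :
    (N₁.andThen N₂).Step (.conf x (Sum.inl q) w) (.conf [] (Sum.inr r) (x ++ w)) := by
  cases h with
  | accept _ _ _ hw hacc =>
    exact Step.restart x w _ _ (Sum.inr '' N₂.I) hw (by simp [andThen, hacc, EndMove.map])
      ⟨r, hr, rfl⟩

lemma step_of_step_andThen_inl {x w : List A} {q : Q₁} {d : NrConf (Q₁ ⊕ Q₂) A}
    (h : (N₁.andThen N₂).Step (.conf x (Sum.inl q) w) d) :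
    (∃ c', N₁.Step (.conf x q w) c' ∧ c' ≠ .accept ∧ c'.map Sum.inl id = d) ∨
      N₁.Step (.conf x q w) .accept ∧ ∃ r ∈ N₂.I, d = .conf [] (Sum.inr r) (x ++ w) := by
  generalize hc : conf x (Sum.inl q) w = c at h
  cases h with
  | read _ _ _ u v a hu ha hq' =>
    obtain ⟨rfl, rfl, rfl⟩ := conf.inj hc
    obtain ⟨q', hq', rfl⟩ := hq'
    exact .inl ⟨_, Step.read x q q' u v a hu ha hq', nofun, rfl⟩
  | restart _ _ _ _ S hw hS hq' =>
    obtain ⟨rfl, rfl, rfl⟩ := conf.inj hc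
    cases hq : N₁.δend q with
    | cont S₁ =>
      simp only [andThen, Sum.elim_inl, hq, EndMove.map, EndMove.cont.injEq] at hS
      obtain ⟨q', hq₁, rfl⟩ := hS ▸ hq'
      exact .inl ⟨_, Step.restart x w q q' S₁ hw hq hq₁, nofun, rfl⟩
    | accept =>
      simp only [andThen, Sum.elim_inl, hq, EndMove.map, EndMove.cont.injEq] at hS
      obtain ⟨r, hr, rfl⟩ := hS ▸ hq'
      exact .inr ⟨Step.accept x w q hw hq, r, hr, rfl⟩
  | accept _ _ _ hw hacc =>
    obtain ⟨rfl, rfl, rfl⟩ := conf.inj hc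
    cases hq : N₁.δend q <;> simp [andThen, hq, EndMove.map] at hacc

lemma step_andThen_inr {c c' : NrConf Q₂ A} (h : N₂.Step c c') :
    (N₁.andThen N₂).Step (c.map Sum.inr id) (c'.map Sum.inr id) := by
  cases h with
  | read x q q' u v a hu ha hq' => exact Step.read x _ _ u v a hu ha ⟨q', hq', rfl⟩
  | restart x w q q' S hw hS hq' =>
    exact Step.restart x w _ _ (Sum.inr '' S) hw (by simp [andThen, hS, EndMove.map])
      ⟨q', hq', rfl⟩
  | accept x w q hw hacc => exact Step.accept x w _ hw (by simp [andThen, hacc, EndMove.map])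

lemma exists_step_of_step_andThen_inr {c : NrConf Q₂ A} {d : NrConf (Q₁ ⊕ Q₂) A}
    (h : (N₁.andThen N₂).Step (c.map Sum.inr id) d) :
    ∃ c', N₂.Step c c' ∧ c'.map Sum.inr id = d := by
  rcases c with ⟨x, q, w⟩ | _
  · generalize hc : (conf x q w).map Sum.inr id = c at h
    cases h with
    | read _ _ _ u v a hu ha hq' =>
      obtain ⟨rfl, rfl, rfl⟩ := conf.inj hc
      obtain ⟨q', hq', rfl⟩ := hq'
      exact ⟨_, Step.read x q q' u v a hu ha hq', rfl⟩
    | restart _ _ _ _ S hw hS hq' =>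
      obtain ⟨rfl, rfl, rfl⟩ := conf.inj hc
      cases hq : N₂.δend q with
      | cont S₂ =>
        simp only [andThen, Sum.elim_inr, hq, EndMove.map, EndMove.cont.injEq] at hS
        obtain ⟨q', hq₂, rfl⟩ := hS ▸ hq'
        exact ⟨_, Step.restart x w q q' S₂ hw hq hq₂, rfl⟩
      | accept => simp [andThen, hq, EndMove.map] at hS
    | accept _ _ _ hw hacc =>
      obtain ⟨rfl, rfl, rfl⟩ := conf.inj hc
      cases hq : N₂.δend q with
      | cont S₂ => simp [andThen, hq, EndMove.map] at hacc
      | accept => exact ⟨_, Step.accept x w q hw hq, rfl⟩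
  · cases h

lemma reflTransGen_andThen_inl {c c' : NrConf Q₁ A} (h : ReflTransGen N₁.Step c c')
    (hc' : c' ≠ .accept) :
    ReflTransGen (N₁.andThen N₂).Step (c.map Sum.inl id) (c'.map Sum.inl id) := by
  induction h with
  | refl => rfl
  | tail _ hstep ih =>
    refine (ih ?_).tail (step_andThen_inl hstep hc')
    rintro rfl
    exact not_step_accept hstep

lemma reflTransGen_andThen_inr_iff {c : NrConf Q₂ A} :
    ReflTransGen (N₁.andThen N₂).Step (c.map Sum.inr id) .accept ↔
      ReflTransGen N₂.Step c .accept := by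
  constructor
  · intro h
    obtain ⟨c', hrun, hc'⟩ :=
      ReflTransGen.exists_preimage (fun _ _ => exists_step_of_step_andThen_inr) h
    rwa [map_eq_accept_iff.1 hc'] at hrun
  · exact fun h => ReflTransGen.lift _ (fun _ _ => step_andThen_inr) _ _ h

lemma exists_of_reflTransGen_andThen_inl {c : NrConf (Q₁ ⊕ Q₂) A}
    (h : ReflTransGen (N₁.andThen N₂).Step c .accept) {x w : List A} {q : Q₁}
    (hc : c = .conf x (Sum.inl q) w) :
    ∃ y p z, ReflTransGen N₁.Step (.conf x q w) (.conf y p z) ∧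
      N₁.Step (.conf y p z) .accept ∧ y ++ z ∈ N₂.lang := by
  induction h using ReflTransGen.head_induction_on generalizing x q w with
  | refl => cases hc
  | head hstep hrun ih =>
    subst hc
    rcases step_of_step_andThen_inl hstep with ⟨c', hstep', hc', rfl⟩ | ⟨hacc, r, hr, rfl⟩
    · rcases c' with ⟨x', q', w'⟩ | _
      · obtain ⟨y, p, z, hrun', hacc, hyz⟩ := ih rfl
        exact ⟨y, p, z, hrun'.head hstep', hacc, hyz⟩
      · exact absurd rfl hc'
    · exact ⟨x, q, w, .refl, hacc, r, hr, reflTransGen_andThen_inr_iff.1 hrun⟩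

theorem mem_lang_andThen {w : List A} :
    w ∈ (N₁.andThen N₂).lang ↔ ∃ q₀ ∈ N₁.I, ∃ x q t,
      ReflTransGen N₁.Step (.conf [] q₀ w) (.conf x q t) ∧ N₁.Step (.conf x q t) .accept ∧
        x ++ t ∈ N₂.lang := by
  constructor
  · rintro ⟨_, ⟨q₀, hq₀, rfl⟩, h⟩
    exact ⟨q₀, hq₀, exists_of_reflTransGen_andThen_inl h rfl⟩
  · rintro ⟨q₀, hq₀, x, q, t, hrun, hacc, r, hr, hrun₂⟩
    refine ⟨Sum.inl q₀, ⟨q₀, hq₀, rfl⟩, ?_⟩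
    exact (reflTransGen_andThen_inl hrun nofun).trans
      (.head (step_andThen_switch hacc hr) (reflTransGen_andThen_inr_iff.2 hrun₂))

end AndThen

theorem mem_lang_andThen_comap {g₁ : B → Option A₁} {g₂ : B → Option A₂}
    {M₁ : NrNFAwtl Q₁ A₁} {M₂ : NrNFAwtl Q₂ A₂} (hg : ∀ b, g₁ b = none ∨ g₂ b = none)
    {w : List B} :
    w ∈ ((M₁.comap g₁).andThen (M₂.comap g₂)).lang ↔
      w.filterMap g₁ ∈ M₁.lang ∧ w.filterMap g₂ ∈ M₂.lang := by
  have htape {q₀ x q t} (hrun : ReflTransGen (M₁.comap g₁).Step (.conf [] q₀ w) (.conf x q t)) :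
      (x ++ t).filterMap g₂ = w.filterMap g₂ := by
    simpa [tape] using filterMap_tape_of_reflTransGen_comap hg hrun nofun
  rw [mem_lang_andThen, ← mem_lang_comap, ← mem_lang_comap]
  constructor
  · rintro ⟨q₀, hq₀, x, q, t, hrun, hacc, ht⟩
    exact ⟨⟨q₀, hq₀, hrun.tail hacc⟩, mem_lang_comap.2 (htape hrun ▸ mem_lang_comap.1 ht)⟩
  · rintro ⟨⟨q₀, hq₀, hrun⟩, hw⟩
    obtain ⟨x, q, t, hrun, hacc⟩ := reflTransGen_accept_iff.1 hrun
    exact ⟨q₀, hq₀, x, q, t, hrun, hacc, mem_lang_comap.2 (htape hrun ▸ mem_lang_comap.1 hw)⟩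

end NrNFAwtl

namespace IsShuffle

variable {A : Type} {u v w : List A}

lemma symm (h : IsShuffle u v w) : IsShuffle v u w := by
  induction h with
  | nil => exact .nil
  | left a u v w _ ih => exact .right a _ _ _ ih
  | right a u v w _ ih => exact .left a _ _ _ ih

lemma filterMap_eq_left {B : Type} {f : A → Option B} (h : IsShuffle u v w)
    (hv : v.filterMap f = []) : w.filterMap f = u.filterMap f := by
  induction h with
  | nil => rfl
  | left a u v w _ ih => simp [List.filterMap_cons, ih hv]
  | right a u v w _ ih =>
    simp only [List.filterMap_eq_nil_iff, List.mem_cons, forall_eq_or_imp] at hv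
    simp [List.filterMap_cons_none hv.1, ih (List.filterMap_eq_nil_iff.2 hv.2)]

end IsShuffle

lemma isShuffle_filterMap_getLeft_getRight {A₁ A₂ : Type} (z : List (A₁ ⊕ A₂)) :
    IsShuffle ((z.filterMap Sum.getLeft?).map Sum.inl) ((z.filterMap Sum.getRight?).map Sum.inr)
      z := by
  induction z with
  | nil => exact .nil
  | cons b z ih =>
    cases b with
    | inl a => simpa [List.filterMap_cons] using ih.left (Sum.inl a)
    | inr a => simpa [List.filterMap_cons] using ih.right (Sum.inr a)

lemma isShuffle_map_inl_map_inr_iff {A₁ A₂ : Type} {u : List A₁} {v : List A₂}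
    {z : List (A₁ ⊕ A₂)} :
    IsShuffle (u.map Sum.inl) (v.map Sum.inr) z ↔
      z.filterMap Sum.getLeft? = u ∧ z.filterMap Sum.getRight? = v := by
  constructor
  · intro h
    constructor
    · simpa [List.filterMap_map, Function.comp_def] using
        h.filterMap_eq_left (f := Sum.getLeft?) (by simp [List.filterMap_map])
    · simpa [List.filterMap_map, Function.comp_def] using
        h.symm.filterMap_eq_left (f := Sum.getRight?) (by simp [List.filterMap_map])
  · rintro ⟨rfl, rfl⟩
    exact isShuffle_filterMap_getLeft_getRight z

/-- The class of languages accepted by nrNFAwtls is closed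
under disjoint shuffle: if `L₁ ⊆ Σ₁*` and `L₂ ⊆ Σ₂*` are accepted by
nrNFAwtls and the alphabets `Σ₁`, `Σ₂` are disjoint (here: the two summands of
`Σ₁ ⊕ Σ₂`), then `sh(L₁, L₂)` is accepted by an nrNFAwtl. -/
theorem nrNFAwtl_closed_under_disjoint_shuffle
    {A₁ A₂ : Type} [Fintype A₁] [Fintype A₂]
    (L₁ : Set (List A₁)) (L₂ : Set (List A₂))
    (h₁ : AcceptedByNrNFAwtl L₁) (h₂ : AcceptedByNrNFAwtl L₂) :
    AcceptedByNrNFAwtl { z : List (A₁ ⊕ A₂) | ∃ u ∈ L₁, ∃ v ∈ L₂,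
      IsShuffle (u.map Sum.inl) (v.map Sum.inr) z } := by
  obtain ⟨Q₁, _, M₁, rfl⟩ := h₁
  obtain ⟨Q₂, _, M₂, rfl⟩ := h₂
  refine ⟨Q₁ ⊕ Q₂, inferInstance, (M₁.comap Sum.getLeft?).andThen (M₂.comap Sum.getRight?), ?_⟩
  ext z
  rw [NrNFAwtl.mem_lang_andThen_comap fun b => by cases b <;> simp]
  simp only [Set.mem_ofPred_eq, isShuffle_map_inl_map_inr_iff]
  constructor
  · rintro ⟨h₁, h₂⟩
    exact ⟨_, h₁, _, h₂, rfl, rfl⟩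
  · rintro ⟨u, hu, v, hv, rfl, rfl⟩
    exact ⟨hu, hv⟩
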